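/- Let κ > 0, ω > 0, γ ∈ ℝ, G_A > 0, G_B > 0, and Δ_A, Δ_B ∈ ℝ with (Δ_A, Δ_B) ≠ (0, 0). Let A(G_A, G_B) be the real 6×6 matrix [[0, ω, 0, 0, 0, 0],[−ω, −γ, G_A, 0, G_B, 0],[0, 0, −κ, Δ_A, 0, 0],[G_A, 0, −Δ_A, −κ, 0, 0],[0, 0, 0, 0, −κ, Δ_B],[G_B, 0, 0, 0, −Δ_B, −κ]]. Then A(G_A, G_B) has the same characteristic polynomial (equivalently, the same eigenvalues with multiplicity) as the decoupled matrix A(0, 0) if and only if G_A = G_B and Δ_A = −Δ_B. -/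

import Mathlib

open Matrix

noncomputable section

/-- Drift matrix of the linearized quantum Langevin equations of a bichromatically
driven cavity with a movable mirror, in the quadrature basis
`(δq, δp, δX_A, δY_A, δX_B, δY_B)`. -/
def driftA2 (ω γ κ ΔA ΔB GA GB : ℝ) : Matrix (Fin 6) (Fin 6) ℝ :=
  !![0, ω, 0, 0, 0, 0;
     -ω, -γ, GA, 0, GB, 0;
     0, 0, -κ, ΔA, 0, 0;
     GA, 0, -ΔA, -κ, 0, 0;
     0, 0, 0, 0, -κ, ΔB;
     GB, 0, 0, 0, -ΔB, -κ]

/-!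
Expanding the determinant, the couplings perturb the decoupled characteristic polynomial only by
`ω` times a quadratic in `X + κ`, so the two agree iff its two coefficients vanish. If `Δ_A = 0`
the first forces `Δ_B = 0`; hence both detunings are nonzero, and adding the two equations gives
`(G_A² + G_B²) (Δ_A + Δ_B) = 0`.
-/

open Polynomial

theorem charmatrix_driftA2 (ω γ κ ΔA ΔB GA GB : ℝ) :
    charmatrix (driftA2 ω γ κ ΔA ΔB GA GB) =
      !![X, -C ω, 0, 0, 0, 0;
         C ω, X + C γ, -C GA, 0, -C GB, 0;
         0, 0, X + C κ, -C ΔA, 0, 0;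
         -C GA, 0, C ΔA, X + C κ, 0, 0;
         0, 0, 0, 0, X + C κ, -C ΔB;
         -C GB, 0, 0, 0, C ΔB, X + C κ] := by
  ext i j
  fin_cases i <;> fin_cases j <;> simp [charmatrix_apply_eq, charmatrix_apply_ne, driftA2]

theorem charpoly_driftA2 (ω γ κ ΔA ΔB GA GB : ℝ) :
    (driftA2 ω γ κ ΔA ΔB GA GB).charpoly =
      (X ^ 2 + C γ * X + C (ω ^ 2)) * ((X + C κ) ^ 2 + C (ΔA ^ 2)) * ((X + C κ) ^ 2 + C (ΔB ^ 2))
        - C ω * (C (GA ^ 2 * ΔA + GB ^ 2 * ΔB) * (X + C κ) ^ 2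
          + C (ΔA * ΔB * (GA ^ 2 * ΔB + GB ^ 2 * ΔA))) := by
  rw [charpoly, charmatrix_driftA2]
  simp only [det_succ_row_zero, Nat.succ_eq_add_one, Nat.reduceAdd, Fin.isValue, of_apply, cons_val',
    cons_val_fin_one, cons_val_zero, submatrix_apply, Fin.succ_zero_eq_one, Fin.succAbove, Fin.castSucc,
    Fin.castAdd, Fin.castLE, cons_val_one, submatrix_submatrix, Function.comp_apply,
    Fin.succ_one_eq_two, cons_val, Fin.reduceSucc, det_unique, Fin.default_eq_zero, Fin.val_eq_zero,
    Fin.zero_eta, Fin.sum_univ_succ, Fin.coe_ofNat_eq_mod, Nat.zero_mod, pow_zero, one_mul,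
    lt_self_iff_false, ↓reduceIte, Nat.mod_succ, Fin.mk_one, Finset.univ_unique, Fin.val_succ,
    zero_add, pow_one, neg_mul, Fin.succ_pos, Finset.sum_neg_distrib, Finset.sum_singleton,
    Nat.one_mod, not_lt_zero, Fin.reduceFinMk, even_two, Even.neg_pow, one_pow, Fin.reduceLT,
    Nat.reduceMod, Fin.lt_one_iff, Fin.reduceEq, neg_neg, zero_mul, mul_zero, neg_zero, add_zero,
    mul_neg, cons_val_succ, Finset.sum_const_zero, map_pow, map_add, map_mul]
  ring

theorem C_mul_X_add_C_sq_add_C_eq_zero_iff {R : Type*} [CommRing R] {a b c : R} :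
    C a * (X + C c) ^ 2 + C b = 0 ↔ a = 0 ∧ b = 0 := by
  refine ⟨fun h ↦ ?_, fun ⟨ha, hb⟩ ↦ by simp [ha, hb]⟩
  have ha : a = 0 := by simpa [coeff_X_add_C_pow] using congrArg (coeff · 2) h
  exact ⟨ha, by simpa [ha] using h⟩

theorem coupling_coeffs_eq_zero_iff {K : Type*} [Field K] [LinearOrder K] [IsStrictOrderedRing K]
    {GA GB ΔA ΔB : K} (hGA : 0 < GA) (hGB : 0 < GB) (hΔ : (ΔA, ΔB) ≠ (0, 0)) :
    GA ^ 2 * ΔA + GB ^ 2 * ΔB = 0 ∧ ΔA * ΔB * (GA ^ 2 * ΔB + GB ^ 2 * ΔA) = 0 ↔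
      GA = GB ∧ ΔA = -ΔB := by
  constructor
  · rintro ⟨h₁, h₂⟩
    have hA : ΔA ≠ 0 := by
      rintro rfl
      exact hΔ (by simpa [hGB.ne'] using h₁)
    have hB : ΔB ≠ 0 := by
      rintro rfl
      exact hΔ (by simpa [hGA.ne'] using h₁)
    have h₃ : GA ^ 2 * ΔB + GB ^ 2 * ΔA = 0 := by simpa [hA, hB] using h₂
    have hsum : ΔA = -ΔB := by
      have : (GA ^ 2 + GB ^ 2) * (ΔA + ΔB) = 0 := by linear_combination h₁ + h₃
      linear_combination (mul_eq_zero.1 this).resolve_left (by positivity)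
    have hsq : (GA ^ 2 - GB ^ 2) * ΔA = 0 := by linear_combination h₁ - GB ^ 2 * hsum
    refine ⟨(sq_eq_sq₀ hGA.le hGB.le).1 ?_, hsum⟩
    linear_combination (mul_eq_zero.1 hsq).resolve_right hA
  · rintro ⟨rfl, rfl⟩
    constructor <;> ring

theorem bichromatic_charpoly_independent_iff (ω γ κ ΔA ΔB GA GB : ℝ)
    (hω : 0 < ω) (hGA : 0 < GA) (hGB : 0 < GB)
    (hΔ : (ΔA, ΔB) ≠ (0, 0)) :
    (driftA2 ω γ κ ΔA ΔB GA GB).charpoly = (driftA2 ω γ κ ΔA ΔB 0 0).charpoly ↔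
      (GA = GB ∧ ΔA = -ΔB) := by
  rw [charpoly_driftA2, charpoly_driftA2 (GA := 0) (GB := 0), sub_right_inj,
    ← coupling_coeffs_eq_zero_iff hGA hGB hΔ, ← C_mul_X_add_C_sq_add_C_eq_zero_iff (c := κ)]
  simp [hω.ne']
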